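/- arXiv:1101.0138 — 2 statements merged into one kernel-verified Lean document; each statement's English description precedes it below -/
import Mathlib

section
/- Let ϱ : ℝ × [0,∞) → ℝ be a shrinkage rule with exponent ρ ∈ [1/2, ∞), i.e., there are constants C₁, C₂, D > 0 with |x − ϱ(x,α)| ≤ C₁ · min(|x|, α) for all α ≥ 0, x ∈ ℝ, and |ϱ(x,α)| ≤ C₂ |x| (|x|/α)^ρ whenever α > 0 and |x| ≤ Dα. Set q = 1/ρ ∈ (0, 2]. Let {f_n}_{n∈ℕ} and {f̃_n}_{n∈ℕ} be a bi-frame for a separable Hilbert space H with synthesis operator F and dual analysis operator F̃*, let L : H → H′ be a bounded linear operator between Hilbert spaces admitting a bounded pseudo-inverse L^#, let (α_n) be nonnegative weights, and assume both F̃* L^# L F and F̃* F are bounded on ℓ_q^{(α_n)} (i.e., each maps sequences with finite weighted penalty ∑_n α_n|ω_n|^q to such sequences, with the penalty increasing by at most a constant factor). Then there exists C > 0 such that for every h in the range of L and every g ∈ H, J_q(h, ĝ) ≤ C · J_q(h, g), where J_q(h,g) = ‖h − Lg‖²_{H′} + ∑_n α_n |⟨g, f̃_n⟩|^q, v = F̃*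 L^# h, and ĝ = F applied to the sequence (ϱ(v_n, α_n |v_n|^{q−1}))_n (entry 0 when v_n = 0). -/
open scoped RealInnerProductSpace ENNReal

noncomputable section

/-- The weighted `ℓ_q` penalty `∑_n α_n |w_n|^q` of a (real) sequence `w`, valued in `ℝ≥0∞`,
with the convention `0^0 = 0`. -/
def wpen (α : ℕ → ℝ) (q : ℝ) (w : ℕ → ℝ) : ℝ≥0∞ :=
  ∑' n, ENNReal.ofReal (α n * (if w n = 0 then 0 else |w n| ^ q))



/-- Master constant for the pointwise shrinkage estimates. -/
def shrinkC (C₁ C₂ D q : ℝ) : ℝ :=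
  4 * C₁ ^ 2 + C₁ ^ 2 * (2:ℝ) ^ q + 4 * C₂ ^ q + 4 * (1 + C₁) ^ q / D + (2 * (1 + C₁)) ^ q

lemma combineZ {X K c Z2 P : ℝ} (h : X ≤ K * Z2) (hK : K ≤ c) (hc : 0 ≤ c)
    (hZ2 : 0 ≤ Z2) (hP : 0 ≤ P) : X ≤ c * (Z2 + P) := by
  nlinarith [mul_nonneg (sub_nonneg.mpr hK) hZ2, mul_nonneg hc hP]

lemma combineP {X K c Z2 P : ℝ} (h : X ≤ K * P) (hK : K ≤ c) (hc : 0 ≤ c)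
    (hZ2 : 0 ≤ Z2) (hP : 0 ≤ P) : X ≤ c * (Z2 + P) := by
  nlinarith [mul_nonneg (sub_nonneg.mpr hK) hP, mul_nonneg hc hZ2]

set_option maxHeartbeats 1000000 in
/-- Pointwise estimates for a shrinkage rule. -/
lemma shrink_pointwise {ϱ : ℝ → ℝ → ℝ} {ρ C₁ C₂ D q : ℝ}
    (hρ : 0 < ρ) (hC₁ : 0 < C₁) (hC₂ : 0 < C₂) (hD : 0 < D)
    (hrule₁ : ∀ (x a : ℝ), 0 ≤ a → |x - ϱ x a| ≤ C₁ * min |x| a)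
    (hrule₂ : ∀ (x a : ℝ), 0 < a → |x| ≤ D * a → |ϱ x a| ≤ C₂ * |x| * (|x| / a) ^ ρ)
    (hq : q = 1 / ρ)
    (αn V Z T : ℝ) (hαn : 0 ≤ αn) (hVZT : V = Z + T) :
    (V - (if V = 0 then 0 else ϱ V (αn * |V| ^ (q - 1)))) ^ 2
        ≤ shrinkC C₁ C₂ D q * (Z ^ 2 + αn * (if T = 0 then 0 else |T| ^ q)) ∧
    αn * (if (if V = 0 then 0 else ϱ V (αn * |V| ^ (q - 1))) = 0 then 0
          else |if V = 0 then 0 else ϱ V (αn * |V| ^ (q - 1))| ^ q)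
        ≤ shrinkC C₁ C₂ D q * (Z ^ 2 + αn * (if T = 0 then 0 else |T| ^ q)) := by
  have hq0 : 0 < q := by rw [hq]; positivity
  have h1C₁ : (0:ℝ) < 1 + C₁ := by linarith
  -- bounds on the master constant
  have h2q : (0:ℝ) < (2:ℝ) ^ q := Real.rpow_pos_of_pos (by norm_num) q
  have hC2q : (0:ℝ) < C₂ ^ q := Real.rpow_pos_of_pos hC₂ q
  have h1Cq : (0:ℝ) < (1 + C₁) ^ q := Real.rpow_pos_of_pos h1C₁ q
  have h21Cq : (0:ℝ) < (2 * (1 + C₁)) ^ q := Real.rpow_pos_of_pos (by linarith) q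
  have hcval : shrinkC C₁ C₂ D q
      = 4 * C₁ ^ 2 + C₁ ^ 2 * (2:ℝ) ^ q + 4 * C₂ ^ q + 4 * (1 + C₁) ^ q / D
        + (2 * (1 + C₁)) ^ q := rfl
  have p0 : (0:ℝ) ≤ 4 * C₁ ^ 2 := by positivity
  have p1 : (0:ℝ) ≤ C₁ ^ 2 * (2:ℝ) ^ q := mul_nonneg (sq_nonneg C₁) h2q.le
  have p2 : (0:ℝ) ≤ 4 * C₂ ^ q := by linarith
  have p3 : (0:ℝ) ≤ 4 * (1 + C₁) ^ q / D := by
    apply div_nonneg _ hD.le; linarith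
  have p4 : (0:ℝ) ≤ (2 * (1 + C₁)) ^ q := h21Cq.le
  have hcA : 4 * C₁ ^ 2 ≤ shrinkC C₁ C₂ D q := by rw [hcval]; linarith
  have hcB : C₁ ^ 2 * (2:ℝ) ^ q ≤ shrinkC C₁ C₂ D q := by rw [hcval]; linarith
  have hcC : 4 * C₂ ^ q ≤ shrinkC C₁ C₂ D q := by rw [hcval]; linarith
  have hcD : 4 * (1 + C₁) ^ q / D ≤ shrinkC C₁ C₂ D q := by rw [hcval]; linarith
  have hcE : (2 * (1 + C₁)) ^ q ≤ shrinkC C₁ C₂ D q := by rw [hcval]; linarith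
  have hc : (0:ℝ) ≤ shrinkC C₁ C₂ D q := by rw [hcval]; linarith
  have hτT : 0 ≤ (if T = 0 then 0 else |T| ^ q) := by
    split
    · exact le_refl 0
    · exact Real.rpow_nonneg (abs_nonneg T) q
  have hP0 : 0 ≤ αn * (if T = 0 then 0 else |T| ^ q) := mul_nonneg hαn hτT
  have hRHS0 : 0 ≤ shrinkC C₁ C₂ D q *
      (Z ^ 2 + αn * (if T = 0 then 0 else |T| ^ q)) := by
    apply mul_nonneg hc
    have := sq_nonneg Z
    linarith
  by_cases hV : V = 0
  · subst hV
    rw [if_pos rfl]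
    refine ⟨by simpa using hRHS0, by simpa using hRHS0⟩
  -- main case V ≠ 0
  have hVabs : 0 < |V| := abs_pos.mpr hV
  have hVne : |V| ≠ 0 := ne_of_gt hVabs
  have ha : 0 ≤ αn * |V| ^ (q - 1) := mul_nonneg hαn (Real.rpow_nonneg (abs_nonneg V) _)
  have hP : αn * |V| ^ q = (αn * |V| ^ (q - 1)) * |V| := by
    have hstep : |V| ^ q = |V| ^ (q - 1) * |V| := by
      rw [← Real.rpow_add_one hVne (q - 1)]; ring_nf
    rw [hstep]; ring
  rw [if_neg hV]
  generalize hadef : αn * |V| ^ (q - 1) = a at ha hP ⊢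
  have hrule₁' : |V - ϱ V a| ≤ C₁ * min |V| a := hrule₁ V a ha
  have hrule₂' : 0 < a → |V| ≤ D * a → |ϱ V a| ≤ C₂ * |V| * (|V| / a) ^ ρ :=
    fun h h' => hrule₂ V a h h'
  generalize hWdef : ϱ V a = W at hrule₁' hrule₂' ⊢
  have h1 : |V - W| ≤ C₁ * min |V| a := hrule₁'
  have hminV : min |V| a ≤ |V| := min_le_left _ _
  have hmina : min |V| a ≤ a := min_le_right _ _
  have hmin0 : 0 ≤ min |V| a := le_min (abs_nonneg V) ha
  have hmin_sq : (min |V| a) ^ 2 ≤ αn * |V| ^ q := by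
    rw [hP, sq]
    exact mul_le_mul hmina hminV hmin0 ha
  have hWle : |W| ≤ (1 + C₁) * |V| := by
    have h2 : |W| - |V| ≤ |W - V| := by
      have := abs_sub_abs_le_abs_sub W V; linarith
    rw [abs_sub_comm] at h2
    have h3 : C₁ * min |V| a ≤ C₁ * |V| := mul_le_mul_of_nonneg_left hminV hC₁.le
    linarith
  have hτWle : (if W = 0 then 0 else |W| ^ q) ≤ (1 + C₁) ^ q * |V| ^ q := by
    rw [← Real.mul_rpow h1C₁.le (abs_nonneg V)]
    split
    · exact Real.rpow_nonneg (mul_nonneg h1C₁.le (abs_nonneg V)) q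
    · exact Real.rpow_le_rpow (abs_nonneg W) hWle hq0.le
  have hVq0 : 0 < |V| ^ q := Real.rpow_pos_of_pos hVabs q
  have hfid : (V - W) ^ 2 ≤ C₁ ^ 2 * (min |V| a) ^ 2 := by
    calc (V - W) ^ 2 = |V - W| ^ 2 := (sq_abs _).symm
      _ ≤ (C₁ * min |V| a) ^ 2 := by
          apply pow_le_pow_left₀ (abs_nonneg _) h1
      _ = C₁ ^ 2 * (min |V| a) ^ 2 := by ring
  by_cases hZV : |V| ≤ 2 * |Z|
  -- Case A : the error dominates
  · have hZ2 : |V| ^ 2 ≤ 4 * Z ^ 2 := by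
      calc |V| ^ 2 ≤ (2 * |Z|) ^ 2 := pow_le_pow_left₀ (abs_nonneg V) hZV 2
        _ = 4 * |Z| ^ 2 := by ring
        _ = 4 * Z ^ 2 := by rw [sq_abs]
    constructor
    · refine combineZ ?_ hcA hc (sq_nonneg Z) hP0
      calc (V - W) ^ 2 ≤ C₁ ^ 2 * (min |V| a) ^ 2 := hfid
        _ ≤ C₁ ^ 2 * |V| ^ 2 :=
            mul_le_mul_of_nonneg_left (pow_le_pow_left₀ hmin0 hminV 2) (sq_nonneg C₁)
        _ ≤ C₁ ^ 2 * (4 * Z ^ 2) := mul_le_mul_of_nonneg_left hZ2 (sq_nonneg C₁)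
        _ = 4 * C₁ ^ 2 * Z ^ 2 := by ring
    · rcases eq_or_lt_of_le ha with ha0 | hapos
      · -- a = 0 : W = V and the weighted term vanishes
        have hmin0' : min |V| a = 0 := by
          rw [← ha0]; exact min_eq_right (abs_nonneg V)
        have hVW : V - W = 0 := by
          rw [hmin0'] at h1
          have h0 : |V - W| ≤ 0 := by linarith
          exact abs_eq_zero.mp (le_antisymm h0 (abs_nonneg _))
        have hWV : W = V := by
          have := sub_eq_zero.mp hVW; linarith
        have hterm : αn * (if W = 0 then 0 else |W| ^ q) = 0 := by
          rw [hWV, if_neg hV, hP, ← ha0]; ring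
        rw [hterm]; exact hRHS0
      · by_cases hDa : |V| ≤ D * a
        · -- use the second shrinkage property
          have h2 : |W| ≤ C₂ * |V| * (|V| / a) ^ ρ := hrule₂' hapos hDa
          have hx : (0:ℝ) ≤ |V| / a := div_nonneg (abs_nonneg V) hapos.le
          have hb : (0:ℝ) ≤ C₂ * |V| := mul_nonneg hC₂.le (abs_nonneg V)
          have hexp : ((|V| / a) ^ ρ) ^ q = |V| / a := by
            rw [← Real.rpow_mul hx ρ q]
            have hpq : ρ * q = 1 := by
              rw [hq]; field_simp
            rw [hpq, Real.rpow_one]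
          have hex : (C₂ * |V| * (|V| / a) ^ ρ) ^ q = C₂ ^ q * |V| ^ q * (|V| / a) := by
            rw [Real.mul_rpow hb (Real.rpow_nonneg hx ρ),
              Real.mul_rpow hC₂.le (abs_nonneg V), hexp]
          have hτWb : (if W = 0 then 0 else |W| ^ q) ≤ C₂ ^ q * |V| ^ q * (|V| / a) := by
            rw [← hex]
            split
            · exact Real.rpow_nonneg (mul_nonneg hb (Real.rpow_nonneg hx ρ)) q
            · exact Real.rpow_le_rpow (abs_nonneg W) h2 hq0.le
          have hane : a ≠ 0 := ne_of_gt hapos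
          have hval : αn * (C₂ ^ q * |V| ^ q * (|V| / a)) = C₂ ^ q * |V| ^ 2 := by
            calc αn * (C₂ ^ q * |V| ^ q * (|V| / a))
                = C₂ ^ q * ((αn * |V| ^ q) * |V|) / a := by ring
              _ = C₂ ^ q * ((a * |V|) * |V|) / a := by rw [hP]
              _ = C₂ ^ q * |V| ^ 2 * (a / a) := by ring
              _ = C₂ ^ q * |V| ^ 2 := by rw [div_self hane, mul_one]
          refine combineZ ?_ hcC hc (sq_nonneg Z) hP0
          calc αn * (if W = 0 then 0 else |W| ^ q)
              ≤ αn * (C₂ ^ q * |V| ^ q * (|V| / a)) :=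
                mul_le_mul_of_nonneg_left hτWb hαn
            _ = C₂ ^ q * |V| ^ 2 := hval
            _ ≤ C₂ ^ q * (4 * Z ^ 2) := mul_le_mul_of_nonneg_left hZ2 hC2q.le
            _ = 4 * C₂ ^ q * Z ^ 2 := by ring
        · -- |V| > D * a
          push_neg at hDa
          have h4 : a ≤ |V| / D := by
            rw [le_div_iff₀ hD, mul_comm]
            linarith
          have haV : a * |V| ≤ |V| ^ 2 / D := by
            calc a * |V| ≤ |V| / D * |V| :=
                mul_le_mul_of_nonneg_right h4 (abs_nonneg V)
              _ = |V| ^ 2 / D := by ring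
          refine combineZ ?_ hcD hc (sq_nonneg Z) hP0
          have hpos : (0:ℝ) ≤ (1 + C₁) ^ q / D := div_nonneg h1Cq.le hD.le
          calc αn * (if W = 0 then 0 else |W| ^ q)
              ≤ αn * ((1 + C₁) ^ q * |V| ^ q) := mul_le_mul_of_nonneg_left hτWle hαn
            _ = (1 + C₁) ^ q * (αn * |V| ^ q) := by ring
            _ = (1 + C₁) ^ q * (a * |V|) := by rw [hP]
            _ ≤ (1 + C₁) ^ q * (|V| ^ 2 / D) := mul_le_mul_of_nonneg_left haV h1Cq.le
            _ = (1 + C₁) ^ q / D * |V| ^ 2 := by ring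
            _ ≤ (1 + C₁) ^ q / D * (4 * Z ^ 2) := mul_le_mul_of_nonneg_left hZ2 hpos
            _ = 4 * (1 + C₁) ^ q / D * Z ^ 2 := by ring
  -- Case B : the signal dominates
  · push_neg at hZV
    have hT : |V| / 2 ≤ |T| := by
      have h2 : |V| - |Z| ≤ |V - Z| := abs_sub_abs_le_abs_sub V Z
      have h3 : V - Z = T := by rw [hVZT]; ring
      rw [h3] at h2
      linarith
    have hTpos : 0 < |T| := by linarith
    have hTne : T ≠ 0 := abs_pos.mp hTpos
    rw [if_neg hTne] at hP0 ⊢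
    have hVq_le : |V| ^ q ≤ 2 ^ q * |T| ^ q := by
      rw [← Real.mul_rpow (by norm_num) (abs_nonneg T)]
      exact Real.rpow_le_rpow (abs_nonneg V) (by linarith) hq0.le
    have hTq0 : 0 ≤ |T| ^ q := Real.rpow_nonneg (abs_nonneg T) q
    have hPB : αn * |V| ^ q ≤ 2 ^ q * (αn * |T| ^ q) := by
      calc αn * |V| ^ q ≤ αn * (2 ^ q * |T| ^ q) := mul_le_mul_of_nonneg_left hVq_le hαn
        _ = 2 ^ q * (αn * |T| ^ q) := by ring
    constructor
    · refine combineP ?_ hcB hc (sq_nonneg Z) hP0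
      calc (V - W) ^ 2 ≤ C₁ ^ 2 * (min |V| a) ^ 2 := hfid
        _ ≤ C₁ ^ 2 * (αn * |V| ^ q) := mul_le_mul_of_nonneg_left hmin_sq (sq_nonneg C₁)
        _ ≤ C₁ ^ 2 * (2 ^ q * (αn * |T| ^ q)) := mul_le_mul_of_nonneg_left hPB (sq_nonneg C₁)
        _ = C₁ ^ 2 * 2 ^ q * (αn * |T| ^ q) := by ring
    · have hmul : (2 * (1 + C₁)) ^ q = 2 ^ q * (1 + C₁) ^ q :=
        Real.mul_rpow (by norm_num) h1C₁.le
      refine combineP ?_ hcE hc (sq_nonneg Z) hP0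
      rw [hmul]
      calc αn * (if W = 0 then 0 else |W| ^ q)
          ≤ αn * ((1 + C₁) ^ q * |V| ^ q) := mul_le_mul_of_nonneg_left hτWle hαn
        _ = (1 + C₁) ^ q * (αn * |V| ^ q) := by ring
        _ ≤ (1 + C₁) ^ q * (2 ^ q * (αn * |T| ^ q)) := mul_le_mul_of_nonneg_left hPB h1Cq.le
        _ = 2 ^ q * (1 + C₁) ^ q * (αn * |T| ^ q) := by ring



lemma rpow_two_eq {y : ℝ} : y ^ (2:ℝ) = y ^ 2 := by
  rw [show (2:ℝ) = ((2:ℕ):ℝ) by norm_num, Real.rpow_natCast]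

lemma lp2_ofReal_norm_sq (x : lp (fun _ : ℕ => ℝ) 2) :
    ENNReal.ofReal (‖x‖ ^ 2) = ∑' n, ENNReal.ofReal (((x : ∀ _ : ℕ, ℝ) n) ^ 2) := by
  have hp : (0:ℝ) < (2:ℝ≥0∞).toReal := by norm_num
  have hnorm := lp.norm_rpow_eq_tsum hp x
  have hsum : Summable (fun n => ‖(x : ∀ _ : ℕ, ℝ) n‖ ^ (2:ℝ≥0∞).toReal) :=
    (lp.memℓp x).summable hp
  have h2 : ((2:ℝ≥0∞)).toReal = (2:ℝ) := by norm_num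
  rw [h2] at hnorm hsum
  calc ENNReal.ofReal (‖x‖ ^ 2)
      = ENNReal.ofReal (‖x‖ ^ (2:ℝ)) := by rw [rpow_two_eq]
    _ = ENNReal.ofReal (∑' n, ‖(x : ∀ _ : ℕ, ℝ) n‖ ^ (2:ℝ)) := by rw [hnorm]
    _ = ∑' n, ENNReal.ofReal (‖(x : ∀ _ : ℕ, ℝ) n‖ ^ (2:ℝ)) :=
        ENNReal.ofReal_tsum_of_nonneg
          (fun n => Real.rpow_nonneg (norm_nonneg _) _) hsum
    _ = ∑' n, ENNReal.ofReal (((x : ∀ _ : ℕ, ℝ) n) ^ 2) := by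
        congr 1; funext n
        rw [rpow_two_eq, Real.norm_eq_abs, sq_abs]

lemma tsum_ofReal_le {u zz pp : ℕ → ℝ} {c : ℝ} (hc : 0 ≤ c)
    (hle : ∀ n, u n ≤ c * (zz n + pp n)) (hz : ∀ n, 0 ≤ zz n) (hp : ∀ n, 0 ≤ pp n) :
    ∑' n, ENNReal.ofReal (u n)
      ≤ ENNReal.ofReal c *
        ((∑' n, ENNReal.ofReal (zz n)) + ∑' n, ENNReal.ofReal (pp n)) := by
  calc ∑' n, ENNReal.ofReal (u n)
      ≤ ∑' n, (ENNReal.ofReal (c * zz n) + ENNReal.ofReal (c * pp n)) := by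
        apply ENNReal.tsum_le_tsum
        intro n
        calc ENNReal.ofReal (u n)
            ≤ ENNReal.ofReal (c * zz n + c * pp n) := by
              apply ENNReal.ofReal_le_ofReal
              rw [← mul_add]; exact hle n
          _ ≤ ENNReal.ofReal (c * zz n) + ENNReal.ofReal (c * pp n) :=
              ENNReal.ofReal_add_le
    _ = (∑' n, ENNReal.ofReal (c * zz n)) + ∑' n, ENNReal.ofReal (c * pp n) :=
        ENNReal.tsum_add
    _ = ENNReal.ofReal c *
        ((∑' n, ENNReal.ofReal (zz n)) + ∑' n, ENNReal.ofReal (pp n)) := by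
        rw [mul_add]
        congr 1
        · rw [← ENNReal.tsum_mul_left]
          congr 1; funext n; rw [ENNReal.ofReal_mul hc]
        · rw [← ENNReal.tsum_mul_left]
          congr 1; funext n; rw [ENNReal.ofReal_mul hc]

lemma wpen_congr {α : ℕ → ℝ} {q : ℝ} {w w' : ℕ → ℝ} (h : ∀ n, w n = w' n) :
    wpen α q w = wpen α q w' := by
  unfold wpen
  exact tsum_congr (fun n => by rw [h n])

lemma shrinkC_nonneg {C₁ C₂ D q : ℝ} (hC₁ : 0 < C₁) (hC₂ : 0 < C₂) (hD : 0 < D) :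
    0 ≤ shrinkC C₁ C₂ D q := by
  have h2q : (0:ℝ) < (2:ℝ) ^ q := Real.rpow_pos_of_pos (by norm_num) q
  have hC2q : (0:ℝ) < C₂ ^ q := Real.rpow_pos_of_pos hC₂ q
  have h1Cq : (0:ℝ) < (1 + C₁) ^ q := Real.rpow_pos_of_pos (by linarith) q
  have h21Cq : (0:ℝ) < (2 * (1 + C₁)) ^ q := Real.rpow_pos_of_pos (by linarith) q
  have p0 : (0:ℝ) ≤ 4 * C₁ ^ 2 := by positivity
  have p1 : (0:ℝ) ≤ C₁ ^ 2 * (2:ℝ) ^ q := mul_nonneg (sq_nonneg C₁) h2q.le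
  have p3 : (0:ℝ) ≤ 4 * (1 + C₁) ^ q / D := by
    apply div_nonneg _ hD.le; linarith
  unfold shrinkC
  linarith

set_option maxHeartbeats 1000000 in
theorem shrinkage_minimizes_up_to_constant_factor_synthesis
    {H H' : Type*}
    [NormedAddCommGroup H] [InnerProductSpace ℝ H] [CompleteSpace H]
    [TopologicalSpace.SeparableSpace H]
    [NormedAddCommGroup H'] [InnerProductSpace ℝ H'] [CompleteSpace H']
    -- a shrinkage rule ϱ with exponent ρ ∈ [1/2, ∞)
    (ϱ : ℝ → ℝ → ℝ) (ρ : ℝ) (hρ : 1 / 2 ≤ ρ)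
    (C₁ C₂ D : ℝ) (hC₁ : 0 < C₁) (hC₂ : 0 < C₂) (hD : 0 < D)
    (hrule₁ : ∀ (x a : ℝ), 0 ≤ a → |x - ϱ x a| ≤ C₁ * min |x| a)
    (hrule₂ : ∀ (x a : ℝ), 0 < a → |x| ≤ D * a → |ϱ x a| ≤ C₂ * |x| * (|x| / a) ^ ρ)
    (q : ℝ) (hq : q = 1 / ρ)
    -- a bi-frame {f n}, {ftil n} for H
    (f ftil : ℕ → H) (A B A' B' : ℝ) (hA : 0 < A) (hAB : A ≤ B) (hA' : 0 < A') (hAB' : A' ≤ B')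
    (hframe : ∀ g : H,
      A * ‖g‖ ^ 2 ≤ ∑' n, ⟪g, f n⟫ ^ 2 ∧ ∑' n, ⟪g, f n⟫ ^ 2 ≤ B * ‖g‖ ^ 2)
    (hframe' : ∀ g : H,
      A' * ‖g‖ ^ 2 ≤ ∑' n, ⟪g, ftil n⟫ ^ 2 ∧ ∑' n, ⟪g, ftil n⟫ ^ 2 ≤ B' * ‖g‖ ^ 2)
    -- synthesis operator F of {f n} and analysis operator F̃* of the dual frame {ftil n}
    (F : lp (fun _ : ℕ => ℝ) 2 →L[ℝ] H)
    (hF : ∀ c : lp (fun _ : ℕ => ℝ) 2, HasSum (fun n => (c : ∀ _ : ℕ, ℝ) n • f n) (F c))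
    (Fta : H →L[ℝ] lp (fun _ : ℕ => ℝ) 2)
    (hFta : ∀ (g : H) (n : ℕ), (Fta g : ∀ _ : ℕ, ℝ) n = ⟪g, ftil n⟫)
    (hbi : ∀ g : H, F (Fta g) = g)
    -- a bounded operator L with bounded pseudo-inverse L^#
    (L : H →L[ℝ] H') (Lsharp : H' →L[ℝ] H)
    (hpinv : ∀ g : H, L (Lsharp (L g)) = L g)
    -- nonnegative weights, and boundedness of F̃* L^# L F on ℓ_q^{(α_n)}
    (α : ℕ → ℝ) (hα : ∀ n, 0 ≤ α n)
    (M : ℝ)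
    (hM : ∀ ω : lp (fun _ : ℕ => ℝ) 2,
      wpen α q (fun n => (Fta (Lsharp (L (F ω))) : ∀ _ : ℕ, ℝ) n)
        ≤ ENNReal.ofReal M * wpen α q (fun n => (ω : ∀ _ : ℕ, ℝ) n))
    (M' : ℝ)
    (hM' : ∀ ω : lp (fun _ : ℕ => ℝ) 2,
      wpen α q (fun n => (Fta (F ω) : ∀ _ : ℕ, ℝ) n)
        ≤ ENNReal.ofReal M' * wpen α q (fun n => (ω : ∀ _ : ℕ, ℝ) n)) :
    ∃ C > (0 : ℝ), ∀ h : H', (∃ g₀ : H, L g₀ = h) →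
      ∃ what : lp (fun _ : ℕ => ℝ) 2,
        -- `what` is the coordinatewise shrinkage of v = F̃* L^# h with thresholds α_n |v_n|^(q-1)
        (∀ n : ℕ, (what : ∀ _ : ℕ, ℝ) n =
          if (Fta (Lsharp h) : ∀ _ : ℕ, ℝ) n = 0 then 0
          else ϱ ((Fta (Lsharp h) : ∀ _ : ℕ, ℝ) n)
                 (α n * |(Fta (Lsharp h) : ∀ _ : ℕ, ℝ) n| ^ (q - 1))) ∧
        -- ĝ = L^# L F what minimizes J_q(h, ·) up to the constant factor C
        ∀ g : H,
          ENNReal.ofReal (‖h - L (F what)‖ ^ 2)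
              + wpen α q (fun n => ⟪F what, ftil n⟫)
            ≤ ENNReal.ofReal C *
              (ENNReal.ofReal (‖h - L g‖ ^ 2) + wpen α q (fun n => ⟪g, ftil n⟫)) := by
  have hρ0 : (0:ℝ) < ρ := lt_of_lt_of_le (by norm_num) hρ
  have hq0 : 0 < q := by rw [hq]; positivity
  set c := shrinkC C₁ C₂ D q with hcdef
  have hc : 0 ≤ c := shrinkC_nonneg hC₁ hC₂ hD
  set K' : ℝ := ‖L.comp F‖ ^ 2 + max M' 0 with hK'def
  set N : ℝ := ‖Fta.comp Lsharp‖ with hNdef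
  set K : ℝ := N ^ 2 + max M 0 with hKdef
  have hK' : 0 ≤ K' := by positivity
  have hK : 0 ≤ K := by positivity
  refine ⟨K' * c * K + 1, by positivity, ?_⟩
  rintro h ⟨g₀, hg₀⟩
  -- the coefficient sequence v and the shrunk sequence
  set v : lp (fun _ : ℕ => ℝ) 2 := Fta (Lsharp h) with hvdef
  set Wfun : ℕ → ℝ := fun n =>
    if (v : ∀ _ : ℕ, ℝ) n = 0 then 0
    else ϱ ((v : ∀ _ : ℕ, ℝ) n) (α n * |(v : ∀ _ : ℕ, ℝ) n| ^ (q - 1)) with hWfun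
  have h1C₁ : (0:ℝ) < 1 + C₁ := by linarith
  -- pointwise domination of the shrunk sequence
  have hWb : ∀ n, ‖Wfun n‖ ≤ (1 + C₁) * ‖(v : ∀ _ : ℕ, ℝ) n‖ := by
    intro n
    rw [hWfun]
    simp only [Real.norm_eq_abs]
    by_cases hvn : (v : ∀ _ : ℕ, ℝ) n = 0
    · rw [if_pos hvn, hvn]
      simp
    · rw [if_neg hvn]
      set V := (v : ∀ _ : ℕ, ℝ) n
      have ha : 0 ≤ α n * |V| ^ (q - 1) :=
        mul_nonneg (hα n) (Real.rpow_nonneg (abs_nonneg V) _)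
      have h1 := hrule₁ V (α n * |V| ^ (q - 1)) ha
      have hmin : min |V| (α n * |V| ^ (q - 1)) ≤ |V| := min_le_left _ _
      have h2 : |ϱ V (α n * |V| ^ (q - 1))| - |V|
          ≤ |ϱ V (α n * |V| ^ (q - 1)) - V| := by
        have := abs_sub_abs_le_abs_sub (ϱ V (α n * |V| ^ (q - 1))) V
        linarith
      rw [abs_sub_comm] at h2
      have h3 : C₁ * min |V| (α n * |V| ^ (q - 1)) ≤ C₁ * |V| :=
        mul_le_mul_of_nonneg_left hmin hC₁.le
      linarith
  -- membership in ℓ²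
  have hmemW : Memℓp Wfun 2 := by
    apply memℓp_gen
    have h2 : ((2:ℝ≥0∞)).toReal = (2:ℝ) := by norm_num
    rw [h2]
    have hv2 : Summable (fun n => ‖(v : ∀ _ : ℕ, ℝ) n‖ ^ (2:ℝ)) := by
      have := (lp.memℓp v).summable (by norm_num : (0:ℝ) < (2:ℝ≥0∞).toReal)
      rwa [h2] at this
    have hv2' : Summable (fun n => (1 + C₁) ^ 2 * ‖(v : ∀ _ : ℕ, ℝ) n‖ ^ (2:ℝ)) :=
      hv2.mul_left _
    apply Summable.of_nonneg_of_le
        (fun n => Real.rpow_nonneg (norm_nonneg _) _) _ hv2'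
    intro n
    rw [rpow_two_eq, rpow_two_eq]
    calc ‖Wfun n‖ ^ 2 ≤ ((1 + C₁) * ‖(v : ∀ _ : ℕ, ℝ) n‖) ^ 2 :=
          pow_le_pow_left₀ (norm_nonneg _) (hWb n) 2
      _ = (1 + C₁) ^ 2 * ‖(v : ∀ _ : ℕ, ℝ) n‖ ^ 2 := by ring
  set what : lp (fun _ : ℕ => ℝ) 2 := ⟨Wfun, hmemW⟩ with hwhatdef
  have hwhatcoe : (what : ∀ _ : ℕ, ℝ) = Wfun := rfl
  refine ⟨what, fun n => rfl, ?_⟩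
  intro g
  -- decomposition v = z + t
  set e : H' := h - L g with hedef
  set z : lp (fun _ : ℕ => ℝ) 2 := Fta (Lsharp e) with hzdef
  set t : lp (fun _ : ℕ => ℝ) 2 := Fta (Lsharp (L g)) with htdef
  have hvzt : v = z + t := by
    rw [hvdef, hzdef, htdef, show h = e + L g by rw [hedef]; abel]
    rw [map_add, map_add]
  have hvzt' : ∀ n, (v : ∀ _ : ℕ, ℝ) n = (z : ∀ _ : ℕ, ℝ) n + (t : ∀ _ : ℕ, ℝ) n := by
    intro n
    rw [hvzt, lp.coeFn_add]
    rfl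
  -- the pointwise estimates
  have hpoint := fun n => shrink_pointwise hρ0 hC₁ hC₂ hD hrule₁ hrule₂ hq
    (α n) ((v : ∀ _ : ℕ, ℝ) n) ((z : ∀ _ : ℕ, ℝ) n) ((t : ∀ _ : ℕ, ℝ) n) (hα n) (hvzt' n)
  -- key quantities
  set Sz : ℝ≥0∞ := ∑' n, ENNReal.ofReal (((z : ∀ _ : ℕ, ℝ) n) ^ 2) with hSzdef
  set Pt : ℝ≥0∞ := wpen α q (fun n => (t : ∀ _ : ℕ, ℝ) n) with hPtdef
  have hppnonneg : ∀ n, 0 ≤ α n *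
      (if (t : ∀ _ : ℕ, ℝ) n = 0 then 0 else |(t : ∀ _ : ℕ, ℝ) n| ^ q) := by
    intro n
    apply mul_nonneg (hα n)
    split
    · exact le_refl 0
    · exact Real.rpow_nonneg (abs_nonneg _) q
  -- fidelity coordinate sum
  have hsumA : ∑' n, ENNReal.ofReal (((v : ∀ _ : ℕ, ℝ) n - Wfun n) ^ 2)
      ≤ ENNReal.ofReal c * (Sz + Pt) := by
    rw [hSzdef, hPtdef]
    exact tsum_ofReal_le hc (fun n => (hpoint n).1) (fun n => sq_nonneg _) hppnonneg
  -- penalty coordinate sum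
  have hsumB : wpen α q Wfun ≤ ENNReal.ofReal c * (Sz + Pt) := by
    rw [hSzdef, hPtdef]
    exact tsum_ofReal_le hc (fun n => (hpoint n).2) (fun n => sq_nonneg _) hppnonneg
  -- h = L (F v)
  have hLFv : L (F v) = h := by
    rw [hvdef, hbi, ← hg₀, hpinv]
  -- fidelity bound
  have hfidelity : ENNReal.ofReal (‖h - L (F what)‖ ^ 2)
      ≤ ENNReal.ofReal (‖L.comp F‖ ^ 2) * (ENNReal.ofReal c * (Sz + Pt)) := by
    have hsub : h - L (F what) = (L.comp F) (v - what) := by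
      rw [map_sub]
      simp only [ContinuousLinearMap.coe_comp', Function.comp_apply]
      rw [hLFv]
    have hnorm : ‖h - L (F what)‖ ≤ ‖L.comp F‖ * ‖v - what‖ := by
      rw [hsub]; exact (L.comp F).le_opNorm _
    calc ENNReal.ofReal (‖h - L (F what)‖ ^ 2)
        ≤ ENNReal.ofReal (‖L.comp F‖ ^ 2 * ‖v - what‖ ^ 2) := by
          apply ENNReal.ofReal_le_ofReal
          calc ‖h - L (F what)‖ ^ 2 ≤ (‖L.comp F‖ * ‖v - what‖) ^ 2 :=
                pow_le_pow_left₀ (norm_nonneg _) hnorm 2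
            _ = ‖L.comp F‖ ^ 2 * ‖v - what‖ ^ 2 := by ring
      _ = ENNReal.ofReal (‖L.comp F‖ ^ 2) * ENNReal.ofReal (‖v - what‖ ^ 2) :=
          ENNReal.ofReal_mul (by positivity)
      _ ≤ ENNReal.ofReal (‖L.comp F‖ ^ 2) * (ENNReal.ofReal c * (Sz + Pt)) := by
          apply mul_le_mul_right
          rw [lp2_ofReal_norm_sq]
          calc ∑' n, ENNReal.ofReal ((((v - what : lp (fun _ : ℕ => ℝ) 2) : ∀ _ : ℕ, ℝ) n) ^ 2)
              = ∑' n, ENNReal.ofReal (((v : ∀ _ : ℕ, ℝ) n - Wfun n) ^ 2) :=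
                tsum_congr (fun n => by rw [lp.coeFn_sub]; rfl)
            _ ≤ ENNReal.ofReal c * (Sz + Pt) := hsumA
  -- penalty bound
  have hpenalty : wpen α q (fun n => ⟪F what, ftil n⟫)
      ≤ ENNReal.ofReal M' * (ENNReal.ofReal c * (Sz + Pt)) := by
    have h1 : wpen α q (fun n => ⟪F what, ftil n⟫)
        = wpen α q (fun n => (Fta (F what) : ∀ _ : ℕ, ℝ) n) :=
      wpen_congr (fun n => (hFta (F what) n).symm)
    rw [h1]
    calc wpen α q (fun n => (Fta (F what) : ∀ _ : ℕ, ℝ) n)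
        ≤ ENNReal.ofReal M' * wpen α q (fun n => (what : ∀ _ : ℕ, ℝ) n) := hM' what
      _ = ENNReal.ofReal M' * wpen α q Wfun := by rw [hwhatcoe]
      _ ≤ ENNReal.ofReal M' * (ENNReal.ofReal c * (Sz + Pt)) := mul_le_mul_right hsumB _
  -- bounding Sz + Pt by the objective at g
  have hSz : Sz ≤ ENNReal.ofReal (N ^ 2) * ENNReal.ofReal (‖e‖ ^ 2) := by
    rw [hSzdef, ← lp2_ofReal_norm_sq z, ← ENNReal.ofReal_mul (by positivity)]
    apply ENNReal.ofReal_le_ofReal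
    have hz2 : ‖z‖ ≤ N * ‖e‖ := by
      rw [hzdef, hNdef]
      exact (Fta.comp Lsharp).le_opNorm e
    calc ‖z‖ ^ 2 ≤ (N * ‖e‖) ^ 2 := pow_le_pow_left₀ (norm_nonneg _) hz2 2
      _ = N ^ 2 * ‖e‖ ^ 2 := by ring
  have hPt : Pt ≤ ENNReal.ofReal M * wpen α q (fun n => ⟪g, ftil n⟫) := by
    have hMt := hM (Fta g)
    rw [hbi g] at hMt
    have h2 : wpen α q (fun n => (Fta g : ∀ _ : ℕ, ℝ) n)
        = wpen α q (fun n => ⟪g, ftil n⟫) :=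
      wpen_congr (fun n => hFta g n)
    rw [h2] at hMt
    exact hMt
  set G : ℝ≥0∞ := wpen α q (fun n => ⟪g, ftil n⟫) with hGdef
  set E : ℝ≥0∞ := ENNReal.ofReal (‖h - L g‖ ^ 2) with hEdef
  have hEe : ENNReal.ofReal (‖e‖ ^ 2) = E := by rw [hEdef, hedef]
  have hSzPt : Sz + Pt ≤ ENNReal.ofReal K * (E + G) := by
    have h1 : Sz ≤ ENNReal.ofReal K * E := by
      rw [← hEe]
      calc Sz ≤ ENNReal.ofReal (N ^ 2) * ENNReal.ofReal (‖e‖ ^ 2) := hSz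
        _ ≤ ENNReal.ofReal K * ENNReal.ofReal (‖e‖ ^ 2) := by
            apply mul_le_mul_left
            apply ENNReal.ofReal_le_ofReal
            rw [hKdef]
            have := le_max_right M 0
            nlinarith [le_max_left M 0, sq_nonneg N]
    have h2 : Pt ≤ ENNReal.ofReal K * G := by
      calc Pt ≤ ENNReal.ofReal M * G := hPt
        _ ≤ ENNReal.ofReal K * G := by
            apply mul_le_mul_left
            apply ENNReal.ofReal_le_ofReal
            rw [hKdef]
            nlinarith [le_max_left M 0, sq_nonneg N]
    calc Sz + Pt ≤ ENNReal.ofReal K * E + ENNReal.ofReal K * G := add_le_add h1 h2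
      _ = ENNReal.ofReal K * (E + G) := (mul_add _ _ _).symm
  -- final combination
  calc ENNReal.ofReal (‖h - L (F what)‖ ^ 2) + wpen α q (fun n => ⟪F what, ftil n⟫)
      ≤ ENNReal.ofReal (‖L.comp F‖ ^ 2) * (ENNReal.ofReal c * (Sz + Pt))
        + ENNReal.ofReal M' * (ENNReal.ofReal c * (Sz + Pt)) := add_le_add hfidelity hpenalty
    _ = (ENNReal.ofReal (‖L.comp F‖ ^ 2) + ENNReal.ofReal M')
        * (ENNReal.ofReal c * (Sz + Pt)) := (add_mul _ _ _).symm
    _ ≤ ENNReal.ofReal K' * (ENNReal.ofReal c * (Sz + Pt)) := by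
        apply mul_le_mul_left
        calc ENNReal.ofReal (‖L.comp F‖ ^ 2) + ENNReal.ofReal M'
            ≤ ENNReal.ofReal (‖L.comp F‖ ^ 2) + ENNReal.ofReal (max M' 0) :=
              add_le_add_right (ENNReal.ofReal_le_ofReal (le_max_left M' 0)) _
          _ = ENNReal.ofReal K' := by
              rw [hK'def, ENNReal.ofReal_add (by positivity) (le_max_right M' 0)]
    _ ≤ ENNReal.ofReal K' * (ENNReal.ofReal c * (ENNReal.ofReal K * (E + G))) := by
        apply mul_le_mul_right
        exact mul_le_mul_right hSzPt _
    _ = ENNReal.ofReal (K' * c * K) * (E + G) := by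
        rw [ENNReal.ofReal_mul (by positivity), ENNReal.ofReal_mul hK']
        ring
    _ ≤ ENNReal.ofReal (K' * c * K + 1) * (E + G) := by
        apply mul_le_mul_left
        apply ENNReal.ofReal_le_ofReal
        linarith
end
end

section
/- Let ϱ : ℝ × [0,∞) → ℝ be a shrinkage rule with exponent ρ ∈ [1/2, ∞), set q = 1/ρ ∈ (0,2]. Let {f_n}, {f̃_n} be a bi-frame for a separable Hilbert space H with synthesis operator F and dual analysis operator F̃*, let (α_n) be nonnegative weights, and suppose F̃* F is bounded on ℓ_q^{(α_n)}. Then there exists C > 0 such that for all h ∈ H and all ω ∈ ℓ²(ℕ), K_q(h, ω̂) ≤ C · K_q(h, ω), where K_q(h, ω) = ‖h − Fω‖²_H + ∑_n α_n |ω_n|^q, v = F̃* h, and ω̂ = F̃* F applied to the sequence (ϱ(v_n, α_n |v_n|^{q−1}))_n (entry 0 when v_n = 0). -/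
open scoped RealInnerProductSpace ENNReal

noncomputable section

lemma wpen_eq (α : ℕ → ℝ) (q : ℝ) (hq : q ≠ 0) (w : ℕ → ℝ) :
    wpen α q w = ∑' n, ENNReal.ofReal (α n * |w n| ^ q) := by
  unfold wpen
  refine tsum_congr fun n => ?_
  by_cases h : w n = 0
  · rw [if_pos h, h]
    simp [Real.zero_rpow hq]
  · rw [if_neg h]

lemma lp2_summable_sq (z : lp (fun _ : ℕ => ℝ) 2) :
    Summable (fun n => ((z : ∀ _ : ℕ, ℝ) n) ^ 2) := by
  have hp : (0:ℝ) < (2:ℝ≥0∞).toReal := by norm_num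
  have hs := (lp.memℓp z).summable hp
  have ht : ((2:ℝ≥0∞)).toReal = (2:ℝ) := by norm_num
  rw [ht] at hs
  simpa [Real.rpow_two, Real.norm_eq_abs, sq_abs] using hs

lemma ofReal_norm_sq (z : lp (fun _ : ℕ => ℝ) 2) :
    ENNReal.ofReal (‖z‖ ^ 2) = ∑' n, ENNReal.ofReal (((z : ∀ _ : ℕ, ℝ) n) ^ 2) := by
  have hp : (0:ℝ) < (2:ℝ≥0∞).toReal := by norm_num
  have ht : ((2:ℝ≥0∞)).toReal = (2:ℝ) := by norm_num
  have h1 := lp.norm_rpow_eq_tsum hp z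
  rw [ht] at h1
  simp only [Real.rpow_two, Real.norm_eq_abs, sq_abs] at h1
  rw [h1, ENNReal.ofReal_tsum_of_nonneg (fun n => sq_nonneg _) (lp2_summable_sq z)]
set_option maxHeartbeats 2000000 in
theorem shrink_key (ϱ : ℝ → ℝ → ℝ) (ρ : ℝ) (hρ : 1 / 2 ≤ ρ)
    (C₁ C₂ D : ℝ) (hC₁ : 0 < C₁) (hC₂ : 0 < C₂) (hD : 0 < D)
    (hrule₁ : ∀ (x a : ℝ), 0 ≤ a → |x - ϱ x a| ≤ C₁ * min |x| a)
    (hrule₂ : ∀ (x a : ℝ), 0 < a → |x| ≤ D * a → |ϱ x a| ≤ C₂ * |x| * (|x| / a) ^ ρ)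
    (q : ℝ) (hq : q = 1 / ρ) :
    ∃ C₀ ≥ (1:ℝ), ∀ (x t c : ℝ), 0 ≤ c →
      (x - (if x = 0 then 0 else ϱ x (c * |x| ^ (q - 1)))) ^ 2
          + c * |if x = 0 then 0 else ϱ x (c * |x| ^ (q - 1))| ^ q
        ≤ C₀ * ((x - t) ^ 2 + c * |t| ^ q) := by
  have hρ0 : 0 < ρ := lt_of_lt_of_le (by norm_num) hρ
  have hq0 : 0 < q := by rw [hq]; positivity
  have hρq : ρ * q = 1 := by rw [hq]; field_simp
  have p1 : (0:ℝ) ≤ (1 + C₁) ^ q := Real.rpow_nonneg (by linarith) _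
  have p2 : (0:ℝ) ≤ C₂ ^ q := Real.rpow_nonneg hC₂.le _
  have p3 : (0:ℝ) < (2:ℝ) ^ q := Real.rpow_pos_of_pos (by norm_num) _
  have p4 : (0:ℝ) ≤ (1 + C₁) ^ q / D := div_nonneg p1 hD.le
  obtain ⟨E, hE⟩ : ∃ E : ℝ, E = C₁ ^ 2 + (1 + C₁) ^ q + C₂ ^ q + (1 + C₁) ^ q / D := ⟨_, rfl⟩
  have hEnn : 0 ≤ E := by rw [hE]; positivity
  have hE1 : (0:ℝ) < E + 1 := by linarith
  refine ⟨(E + 1) * ((2:ℝ) ^ q + 4), by nlinarith, ?_⟩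
  intro x t c hc
  have htq : 0 ≤ c * |t| ^ q := mul_nonneg hc (Real.rpow_nonneg (abs_nonneg t) _)
  have hC₀nn : (0:ℝ) ≤ (E + 1) * ((2:ℝ) ^ q + 4) := by nlinarith
  have hRHSnn : (0:ℝ) ≤ (x - t) ^ 2 + c * |t| ^ q := by positivity
  by_cases hx : x = 0
  · subst hx
    rw [if_pos rfl]
    have hL0 : ((0:ℝ) - 0) ^ 2 + c * |(0:ℝ)| ^ q = 0 := by
      simp [Real.zero_rpow hq0.ne']
    rw [hL0]
    exact mul_nonneg hC₀nn hRHSnn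
  · rw [if_neg hx]
    obtain ⟨a, ha_def⟩ : ∃ a : ℝ, a = c * |x| ^ (q - 1) := ⟨_, rfl⟩
    rw [← ha_def]
    obtain ⟨s, hs_def⟩ : ∃ s : ℝ, s = ϱ x a := ⟨_, rfl⟩
    rw [← hs_def]
    have hxpos : 0 < |x| := abs_pos.mpr hx
    have ha : 0 ≤ a := by rw [ha_def]; exact mul_nonneg hc (Real.rpow_nonneg (abs_nonneg x) _)
    have h1 : |x - s| ≤ C₁ * min |x| a := by rw [hs_def]; exact hrule₁ x a ha
    have hminx : min |x| a ≤ |x| := min_le_left _ _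
    have hmina : min |x| a ≤ a := min_le_right _ _
    have hminnn : 0 ≤ min |x| a := le_min hxpos.le ha
    have habs2 : |x| * |x| = x ^ 2 := by rw [abs_mul_abs_self, ← pow_two]
    have hsb : |s| ≤ (1 + C₁) * |x| := by
      have h2 := abs_sub_abs_le_abs_sub s x
      rw [abs_sub_comm] at h2
      nlinarith
    have hxq : c * |x| ^ q = a * |x| := by
      have hxx : |x| ^ q = |x| ^ (q - 1 + 1) := by norm_num
      rw [hxx, Real.rpow_add hxpos, Real.rpow_one, ha_def]; ring
    have hxqnn : 0 ≤ c * |x| ^ q := mul_nonneg hc (Real.rpow_nonneg (abs_nonneg x) _)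
    have h2 : (x - s) ^ 2 ≤ C₁ ^ 2 * (c * |x| ^ q) := by
      have hsq : |x - s| ^ 2 ≤ (C₁ * min |x| a) ^ 2 :=
        pow_le_pow_left₀ (abs_nonneg _) h1 2
      have hmm : min |x| a * min |x| a ≤ |x| * a :=
        mul_le_mul hminx hmina hminnn (abs_nonneg x)
      rw [hxq]
      nlinarith [sq_abs (x - s), sq_nonneg C₁]
    have h3 : c * |s| ^ q ≤ (1 + C₁) ^ q * (c * |x| ^ q) := by
      have hr : |s| ^ q ≤ ((1 + C₁) * |x|) ^ q :=
        Real.rpow_le_rpow (abs_nonneg s) hsb hq0.le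
      rw [Real.mul_rpow (by linarith) (abs_nonneg x)] at hr
      nlinarith [Real.rpow_nonneg (abs_nonneg x) q]
    by_cases hcase : |x| ≤ 2 * |t|
    · -- Case A
      have hxt : c * |x| ^ q ≤ (2:ℝ) ^ q * (c * |t| ^ q) := by
        have hr : |x| ^ q ≤ (2 * |t|) ^ q :=
          Real.rpow_le_rpow (abs_nonneg x) hcase hq0.le
        rw [Real.mul_rpow (by norm_num) (abs_nonneg t)] at hr
        nlinarith [Real.rpow_nonneg (abs_nonneg t) q]
      have hLE : C₁ ^ 2 + (1 + C₁) ^ q ≤ E := by rw [hE]; linarith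
      have hLnn : (0:ℝ) ≤ C₁ ^ 2 + (1 + C₁) ^ q := by positivity
      have hcoef : (C₁ ^ 2 + (1 + C₁) ^ q) * (2:ℝ) ^ q ≤ (E + 1) * ((2:ℝ) ^ q + 4) := by
        nlinarith [mul_nonneg (sub_nonneg.mpr hLE) p3.le]
      calc (x - s) ^ 2 + c * |s| ^ q
          ≤ (C₁ ^ 2 + (1 + C₁) ^ q) * (c * |x| ^ q) := by linarith
        _ ≤ (C₁ ^ 2 + (1 + C₁) ^ q) * ((2:ℝ) ^ q * (c * |t| ^ q)) :=
            mul_le_mul_of_nonneg_left hxt hLnn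
        _ = (C₁ ^ 2 + (1 + C₁) ^ q) * (2:ℝ) ^ q * (c * |t| ^ q) := by ring
        _ ≤ (E + 1) * ((2:ℝ) ^ q + 4) * (c * |t| ^ q) :=
            mul_le_mul_of_nonneg_right hcoef htq
        _ ≤ (E + 1) * ((2:ℝ) ^ q + 4) * ((x - t) ^ 2 + c * |t| ^ q) :=
            mul_le_mul_of_nonneg_left (by nlinarith [sq_nonneg (x - t)]) hC₀nn
    · -- Case B
      push_neg at hcase
      have hB : x ^ 2 ≤ 4 * (x - t) ^ 2 := by
        have h5 := abs_sub_abs_le_abs_sub x t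
        nlinarith [sq_abs (x - t), sq_abs x, abs_nonneg t, abs_nonneg (x - t)]
      have h2' : (x - s) ^ 2 ≤ C₁ ^ 2 * x ^ 2 := by
        nlinarith [sq_abs (x - s), sq_abs x, abs_nonneg (x - s), sq_nonneg C₁,
          mul_le_mul hminx hminx hminnn (abs_nonneg x)]
      have h4 : c * |s| ^ q ≤ (C₂ ^ q + (1 + C₁) ^ q / D) * x ^ 2 := by
        by_cases hBa : |x| ≤ D * a
        · have ha' : 0 < a := by
            rcases lt_or_eq_of_le ha with hlt | heq
            · exact hlt
            · exfalso; rw [← heq, mul_zero] at hBa; linarith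
          have hs2 : |s| ≤ C₂ * |x| * (|x| / a) ^ ρ := by
            rw [hs_def]; exact hrule₂ x a ha' hBa
          have hda : 0 ≤ |x| / a := div_nonneg (abs_nonneg x) ha'.le
          have hexp : (C₂ * |x| * (|x| / a) ^ ρ) ^ q = C₂ ^ q * |x| ^ q * (|x| / a) := by
            rw [Real.mul_rpow (by positivity) (Real.rpow_nonneg hda ρ),
              Real.mul_rpow hC₂.le (abs_nonneg x), ← Real.rpow_mul hda, hρq, Real.rpow_one]
          have hsq : |s| ^ q ≤ C₂ ^ q * |x| ^ q * (|x| / a) := by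
            rw [← hexp]
            exact Real.rpow_le_rpow (abs_nonneg s) hs2 hq0.le
          have h13 : a * |x| * |x| / a = x ^ 2 := by
            rw [div_eq_iff ha'.ne', ← habs2]; ring
          have hval : c * (C₂ ^ q * |x| ^ q * (|x| / a)) = C₂ ^ q * x ^ 2 := by
            have h8 : c * (C₂ ^ q * |x| ^ q * (|x| / a)) =
                C₂ ^ q * ((c * |x| ^ q) * |x| / a) := by ring
            rw [h8, hxq, h13]
          have h9 : c * |s| ^ q ≤ c * (C₂ ^ q * |x| ^ q * (|x| / a)) :=
            mul_le_mul_of_nonneg_left hsq hc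
          rw [hval] at h9
          nlinarith [mul_nonneg p4 (sq_nonneg x)]
        · push_neg at hBa
          have haD : a ≤ |x| / D := by rw [le_div_iff₀ hD]; nlinarith
          have h10 : c * |s| ^ q ≤ (1 + C₁) ^ q * (a * |x|) := by rw [← hxq]; exact h3
          have h11 : (1 + C₁) ^ q * (a * |x|) ≤ (1 + C₁) ^ q * ((|x| / D) * |x|) :=
            mul_le_mul_of_nonneg_left
              (mul_le_mul_of_nonneg_right haD (abs_nonneg x)) p1
          have h12 : (1 + C₁) ^ q * ((|x| / D) * |x|) = ((1 + C₁) ^ q / D) * x ^ 2 := by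
            rw [← habs2]; field_simp
          nlinarith [mul_nonneg p2 (sq_nonneg x)]
      have hL : (x - s) ^ 2 + c * |s| ^ q ≤ (E + 1) * x ^ 2 := by
        rw [hE]
        nlinarith [mul_nonneg p1 (sq_nonneg x), sq_nonneg x]
      calc (x - s) ^ 2 + c * |s| ^ q
          ≤ (E + 1) * x ^ 2 := hL
        _ ≤ (E + 1) * (4 * (x - t) ^ 2) := mul_le_mul_of_nonneg_left hB hE1.le
        _ ≤ (E + 1) * ((2:ℝ) ^ q + 4) * ((x - t) ^ 2) := by
            nlinarith [mul_nonneg (mul_nonneg hE1.le p3.le) (sq_nonneg (x - t))]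
        _ ≤ (E + 1) * ((2:ℝ) ^ q + 4) * ((x - t) ^ 2 + c * |t| ^ q) :=
            mul_le_mul_of_nonneg_left (by linarith) hC₀nn
theorem shrinkage_minimizes_sparse_approximation_analysis_synthesis
    {H : Type*}
    [NormedAddCommGroup H] [InnerProductSpace ℝ H] [CompleteSpace H]
    [TopologicalSpace.SeparableSpace H]
    -- a shrinkage rule ϱ with exponent ρ ∈ [1/2, ∞)
    (ϱ : ℝ → ℝ → ℝ) (ρ : ℝ) (hρ : 1 / 2 ≤ ρ)
    (C₁ C₂ D : ℝ) (hC₁ : 0 < C₁) (hC₂ : 0 < C₂) (hD : 0 < D)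
    (hrule₁ : ∀ (x a : ℝ), 0 ≤ a → |x - ϱ x a| ≤ C₁ * min |x| a)
    (hrule₂ : ∀ (x a : ℝ), 0 < a → |x| ≤ D * a → |ϱ x a| ≤ C₂ * |x| * (|x| / a) ^ ρ)
    (q : ℝ) (hq : q = 1 / ρ)
    -- a bi-frame {f n}, {ftil n} for H
    (f ftil : ℕ → H) (A B A' B' : ℝ) (hA : 0 < A) (hAB : A ≤ B) (hA' : 0 < A') (hAB' : A' ≤ B')
    (hframe : ∀ g : H,
      A * ‖g‖ ^ 2 ≤ ∑' n, ⟪g, f n⟫ ^ 2 ∧ ∑' n, ⟪g, f n⟫ ^ 2 ≤ B * ‖g‖ ^ 2)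
    (hframe' : ∀ g : H,
      A' * ‖g‖ ^ 2 ≤ ∑' n, ⟪g, ftil n⟫ ^ 2 ∧ ∑' n, ⟪g, ftil n⟫ ^ 2 ≤ B' * ‖g‖ ^ 2)
    -- synthesis operator F of {f n} and analysis operator F̃* of the dual frame {ftil n}
    (F : lp (fun _ : ℕ => ℝ) 2 →L[ℝ] H)
    (hF : ∀ c : lp (fun _ : ℕ => ℝ) 2, HasSum (fun n => (c : ∀ _ : ℕ, ℝ) n • f n) (F c))
    (Fta : H →L[ℝ] lp (fun _ : ℕ => ℝ) 2)
    (hFta : ∀ (g : H) (n : ℕ), (Fta g : ∀ _ : ℕ, ℝ) n = ⟪g, ftil n⟫)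
    (hbi : ∀ g : H, F (Fta g) = g)
    -- nonnegative weights, and boundedness of F̃* F on ℓ_q^{(α_n)}
    (α : ℕ → ℝ) (hα : ∀ n, 0 ≤ α n)
    (M : ℝ)
    (hM : ∀ ω : lp (fun _ : ℕ => ℝ) 2,
      wpen α q (fun n => (Fta (F ω) : ∀ _ : ℕ, ℝ) n)
        ≤ ENNReal.ofReal M * wpen α q (fun n => (ω : ∀ _ : ℕ, ℝ) n)) :
    ∃ C > (0 : ℝ), ∀ h : H,
      ∃ what : lp (fun _ : ℕ => ℝ) 2,
        -- ω̂_n = ϱ(v_n, α_n |v_n|^(q−1)) with v = F̃* h (and ω̂_n = 0 when v_n = 0)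
        (∀ n : ℕ, (what : ∀ _ : ℕ, ℝ) n =
          if (Fta h : ∀ _ : ℕ, ℝ) n = 0 then 0
          else ϱ ((Fta h : ∀ _ : ℕ, ℝ) n) (α n * |(Fta h : ∀ _ : ℕ, ℝ) n| ^ (q - 1))) ∧
        -- ω̂ = F̃* F applied to that sequence minimizes K_q(h, ·) up to the constant factor C
        ∀ ω : lp (fun _ : ℕ => ℝ) 2,
          ENNReal.ofReal (‖h - F (Fta (F what))‖ ^ 2)
              + wpen α q (fun n => (Fta (F what) : ∀ _ : ℕ, ℝ) n)
            ≤ ENNReal.ofReal C *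
              (ENNReal.ofReal (‖h - F ω‖ ^ 2) + wpen α q (fun n => (ω : ∀ _ : ℕ, ℝ) n)) := by
  have hρ0 : 0 < ρ := lt_of_lt_of_le (by norm_num) hρ
  have hq0 : 0 < q := by rw [hq]; positivity
  obtain ⟨C₀, hC₀1, hkey⟩ := shrink_key ϱ ρ hρ C₁ C₂ D hC₁ hC₂ hD hrule₁ hrule₂ q hq
  have hC₀nn : (0:ℝ) ≤ C₀ := by linarith
  -- constants
  obtain ⟨NN, hNN⟩ : ∃ NN : ℝ, NN = (‖F‖ * (‖Fta‖ * ‖F‖)) ^ 2 := ⟨_, rfl⟩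
  have hNNnn : 0 ≤ NN := by rw [hNN]; positivity
  obtain ⟨K₁, hK₁⟩ : ∃ K₁ : ℝ, K₁ = max NN (max M 1) := ⟨_, rfl⟩
  have hK₁1 : (1:ℝ) ≤ K₁ := by rw [hK₁]; exact le_trans (le_max_right M 1) (le_max_right _ _)
  have hK₁nn : (0:ℝ) ≤ K₁ := by linarith
  obtain ⟨K₂, hK₂⟩ : ∃ K₂ : ℝ, K₂ = max (‖Fta‖ ^ 2) (max M 1) := ⟨_, rfl⟩
  have hK₂1 : (1:ℝ) ≤ K₂ := by rw [hK₂]; exact le_trans (le_max_right M 1) (le_max_right _ _)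
  have hK₂nn : (0:ℝ) ≤ K₂ := by linarith
  refine ⟨K₁ * C₀ * K₂, mul_pos (mul_pos (lt_of_lt_of_le one_pos hK₁1) (lt_of_lt_of_le one_pos hC₀1)) (lt_of_lt_of_le one_pos hK₂1), fun h => ?_⟩
  -- the shrunk sequence
  set v : ℕ → ℝ := fun n => (Fta h : ∀ _ : ℕ, ℝ) n with hv
  have hwle : ∀ n : ℕ,
      |if v n = 0 then 0 else ϱ (v n) (α n * |v n| ^ (q - 1))| ≤ (1 + C₁) * |v n| := by
    intro n
    by_cases h0 : v n = 0
    · rw [if_pos h0, h0]; simp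
    · rw [if_neg h0]
      have ha : 0 ≤ α n * |v n| ^ (q - 1) :=
        mul_nonneg (hα n) (Real.rpow_nonneg (abs_nonneg _) _)
      have h1 := hrule₁ (v n) (α n * |v n| ^ (q - 1)) ha
      have h2 := abs_sub_abs_le_abs_sub (ϱ (v n) (α n * |v n| ^ (q - 1))) (v n)
      rw [abs_sub_comm] at h2
      have h3 : min |v n| (α n * |v n| ^ (q - 1)) ≤ |v n| := min_le_left _ _
      nlinarith [abs_nonneg (v n)]
  have hmem : Memℓp (fun n => if v n = 0 then 0 else ϱ (v n) (α n * |v n| ^ (q - 1))) 2 := by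
    apply memℓp_gen
    have hsum : Summable fun n => (1 + C₁) ^ 2 * (v n) ^ 2 :=
      (lp2_summable_sq (Fta h)).mul_left _
    have ht : ((2:ℝ≥0∞)).toReal = (2:ℝ) := by norm_num
    refine Summable.of_nonneg_of_le (fun n => ?_) (fun n => ?_) hsum
    · exact Real.rpow_nonneg (norm_nonneg _) _
    · rw [ht, Real.rpow_two, Real.norm_eq_abs]
      have := hwle n
      nlinarith [abs_nonneg (if v n = 0 then 0 else ϱ (v n) (α n * |v n| ^ (q - 1))),
        abs_nonneg (v n), sq_abs (v n)]
  refine ⟨⟨_, hmem⟩, fun n => rfl, fun ω => ?_⟩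
  set what : lp (fun _ : ℕ => ℝ) 2 := ⟨_, hmem⟩ with hwhat
  set wbar : ℕ → ℝ := fun n => if v n = 0 then 0 else ϱ (v n) (α n * |v n| ^ (q - 1)) with hwbar
  set u : ℕ → ℝ := fun n => (Fta (F ω) : ∀ _ : ℕ, ℝ) n with hu
  -- sums
  set S₁ : ℝ≥0∞ := ∑' n, ENNReal.ofReal ((v n - wbar n) ^ 2) with hS₁
  set S₂ : ℝ≥0∞ := ∑' n, ENNReal.ofReal (α n * |wbar n| ^ q) with hS₂
  set T₁ : ℝ≥0∞ := ∑' n, ENNReal.ofReal ((v n - u n) ^ 2) with hT₁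
  set T₂ : ℝ≥0∞ := ∑' n, ENNReal.ofReal (α n * |u n| ^ q) with hT₂
  -- the key summed inequality
  have hterm : ∀ n, ENNReal.ofReal ((v n - wbar n) ^ 2) + ENNReal.ofReal (α n * |wbar n| ^ q)
      ≤ ENNReal.ofReal C₀ *
        (ENNReal.ofReal ((v n - u n) ^ 2) + ENNReal.ofReal (α n * |u n| ^ q)) := by
    intro n
    have hk := hkey (v n) (u n) (α n) (hα n)
    have nn1 : 0 ≤ α n * |wbar n| ^ q := mul_nonneg (hα n) (Real.rpow_nonneg (abs_nonneg _) _)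
    have nn2 : 0 ≤ α n * |u n| ^ q := mul_nonneg (hα n) (Real.rpow_nonneg (abs_nonneg _) _)
    calc ENNReal.ofReal ((v n - wbar n) ^ 2) + ENNReal.ofReal (α n * |wbar n| ^ q)
        = ENNReal.ofReal ((v n - wbar n) ^ 2 + α n * |wbar n| ^ q) :=
          (ENNReal.ofReal_add (sq_nonneg _) nn1).symm
      _ ≤ ENNReal.ofReal (C₀ * ((v n - u n) ^ 2 + α n * |u n| ^ q)) :=
          ENNReal.ofReal_le_ofReal hk
      _ = ENNReal.ofReal C₀ *
            (ENNReal.ofReal ((v n - u n) ^ 2) + ENNReal.ofReal (α n * |u n| ^ q)) := by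
          rw [ENNReal.ofReal_mul hC₀nn, ENNReal.ofReal_add (sq_nonneg _) nn2]
  have hsumkey : S₁ + S₂ ≤ ENNReal.ofReal C₀ * (T₁ + T₂) := by
    rw [hS₁, hS₂, hT₁, hT₂, ← ENNReal.tsum_add, ← ENNReal.tsum_add, ← ENNReal.tsum_mul_left]
    exact ENNReal.tsum_le_tsum hterm
  -- identify the wpen terms
  have hwpen_what : wpen α q (fun n => (what : ∀ _ : ℕ, ℝ) n) = S₂ := by
    rw [wpen_eq α q hq0.ne']
  have hwpen_u : wpen α q (fun n => (Fta (F ω) : ∀ _ : ℕ, ℝ) n) = T₂ := by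
    rw [wpen_eq α q hq0.ne']
  -- norm bound for the first LHS term
  have hS₁norm : ENNReal.ofReal (‖(Fta h - what : lp (fun _ : ℕ => ℝ) 2)‖ ^ 2) = S₁ := by
    rw [ofReal_norm_sq, hS₁]
    refine tsum_congr fun n => ?_
    rw [lp.coeFn_sub, Pi.sub_apply]
  have hLHS1 : ENNReal.ofReal (‖h - F (Fta (F what))‖ ^ 2) ≤ ENNReal.ofReal NN * S₁ := by
    have e2 : h - F (Fta (F what)) = F (Fta (F (Fta h - what))) := by
      rw [map_sub, map_sub, map_sub, hbi h, hbi h]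
    have hb : ‖h - F (Fta (F what))‖ ≤ ‖F‖ * (‖Fta‖ * ‖F‖) * ‖Fta h - what‖ := by
      rw [e2]
      calc ‖F (Fta (F (Fta h - what)))‖ ≤ ‖F‖ * ‖Fta (F (Fta h - what))‖ := F.le_opNorm _
        _ ≤ ‖F‖ * (‖Fta‖ * ‖F (Fta h - what)‖) := by
            gcongr; exact Fta.le_opNorm _
        _ ≤ ‖F‖ * (‖Fta‖ * (‖F‖ * ‖Fta h - what‖)) := by
            gcongr; exact F.le_opNorm _
        _ = ‖F‖ * (‖Fta‖ * ‖F‖) * ‖Fta h - what‖ := by ring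
    have hb2 : ‖h - F (Fta (F what))‖ ^ 2 ≤ NN * ‖Fta h - what‖ ^ 2 := by
      have := pow_le_pow_left₀ (norm_nonneg _) hb 2
      rw [mul_pow] at this
      rw [hNN]
      exact this
    calc ENNReal.ofReal (‖h - F (Fta (F what))‖ ^ 2)
        ≤ ENNReal.ofReal (NN * ‖Fta h - what‖ ^ 2) := ENNReal.ofReal_le_ofReal hb2
      _ = ENNReal.ofReal NN * ENNReal.ofReal (‖Fta h - what‖ ^ 2) := by
          rw [ENNReal.ofReal_mul hNNnn]
      _ = ENNReal.ofReal NN * S₁ := by rw [hS₁norm]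
  -- bound for T₁
  have hT₁norm : T₁ ≤ ENNReal.ofReal (‖Fta‖ ^ 2) * ENNReal.ofReal (‖h - F ω‖ ^ 2) := by
    have e3 : ENNReal.ofReal (‖(Fta h - Fta (F ω) : lp (fun _ : ℕ => ℝ) 2)‖ ^ 2) = T₁ := by
      rw [ofReal_norm_sq, hT₁]
      refine tsum_congr fun n => ?_
      rw [lp.coeFn_sub, Pi.sub_apply]
    have hb : ‖(Fta h - Fta (F ω) : lp (fun _ : ℕ => ℝ) 2)‖ ≤ ‖Fta‖ * ‖h - F ω‖ := by
      rw [← map_sub]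
      exact Fta.le_opNorm _
    have hb2 : ‖(Fta h - Fta (F ω) : lp (fun _ : ℕ => ℝ) 2)‖ ^ 2 ≤ ‖Fta‖ ^ 2 * ‖h - F ω‖ ^ 2 := by
      have := pow_le_pow_left₀ (norm_nonneg _) hb 2
      rwa [mul_pow] at this
    rw [← e3, ← ENNReal.ofReal_mul (by positivity)]
    exact ENNReal.ofReal_le_ofReal hb2
  -- assemble
  have hMK₁ : ENNReal.ofReal M ≤ ENNReal.ofReal K₁ :=
    ENNReal.ofReal_le_ofReal (by rw [hK₁]; exact le_trans (le_max_left M 1) (le_max_right _ _))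
  have hNNK₁ : ENNReal.ofReal NN ≤ ENNReal.ofReal K₁ :=
    ENNReal.ofReal_le_ofReal (by rw [hK₁]; exact le_max_left _ _)
  have hMK₂ : ENNReal.ofReal M ≤ ENNReal.ofReal K₂ :=
    ENNReal.ofReal_le_ofReal (by rw [hK₂]; exact le_trans (le_max_left M 1) (le_max_right _ _))
  have hFtaK₂ : ENNReal.ofReal (‖Fta‖ ^ 2) ≤ ENNReal.ofReal K₂ :=
    ENNReal.ofReal_le_ofReal (by rw [hK₂]; exact le_max_left _ _)
  calc ENNReal.ofReal (‖h - F (Fta (F what))‖ ^ 2)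
        + wpen α q (fun n => (Fta (F what) : ∀ _ : ℕ, ℝ) n)
      ≤ ENNReal.ofReal NN * S₁ + ENNReal.ofReal M * S₂ := by
        refine add_le_add hLHS1 ?_
        calc wpen α q (fun n => (Fta (F what) : ∀ _ : ℕ, ℝ) n)
            ≤ ENNReal.ofReal M * wpen α q (fun n => (what : ∀ _ : ℕ, ℝ) n) := hM what
          _ = ENNReal.ofReal M * S₂ := by rw [hwpen_what]
    _ ≤ ENNReal.ofReal K₁ * S₁ + ENNReal.ofReal K₁ * S₂ :=
        add_le_add (mul_le_mul_left hNNK₁ _) (mul_le_mul_left hMK₁ _)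
    _ = ENNReal.ofReal K₁ * (S₁ + S₂) := (mul_add _ _ _).symm
    _ ≤ ENNReal.ofReal K₁ * (ENNReal.ofReal C₀ * (T₁ + T₂)) :=
        mul_le_mul_right hsumkey _
    _ ≤ ENNReal.ofReal K₁ * (ENNReal.ofReal C₀ * (ENNReal.ofReal K₂ *
          (ENNReal.ofReal (‖h - F ω‖ ^ 2) + wpen α q (fun n => (ω : ∀ _ : ℕ, ℝ) n)))) := by
        refine mul_le_mul_right (mul_le_mul_right ?_ _) _
        have hT₂b : T₂ ≤ ENNReal.ofReal K₂ * wpen α q (fun n => (ω : ∀ _ : ℕ, ℝ) n) := by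
          rw [← hwpen_u]
          exact le_trans (hM ω) (mul_le_mul_left hMK₂ _)
        have hT₁b : T₁ ≤ ENNReal.ofReal K₂ * ENNReal.ofReal (‖h - F ω‖ ^ 2) :=
          le_trans hT₁norm (mul_le_mul_left hFtaK₂ _)
        calc T₁ + T₂ ≤ ENNReal.ofReal K₂ * ENNReal.ofReal (‖h - F ω‖ ^ 2)
              + ENNReal.ofReal K₂ * wpen α q (fun n => (ω : ∀ _ : ℕ, ℝ) n) :=
            add_le_add hT₁b hT₂b
          _ = ENNReal.ofReal K₂ *
              (ENNReal.ofReal (‖h - F ω‖ ^ 2) + wpen α q (fun n => (ω : ∀ _ : ℕ, ℝ) n)) :=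
            (mul_add _ _ _).symm
    _ = ENNReal.ofReal (K₁ * C₀ * K₂) *
          (ENNReal.ofReal (‖h - F ω‖ ^ 2) + wpen α q (fun n => (ω : ∀ _ : ℕ, ℝ) n)) := by
        rw [ENNReal.ofReal_mul (by positivity), ENNReal.ofReal_mul hK₁nn]
        ring
end
end
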